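/- Let p ≥ 2 and let (φ_n)_{n≥1} be defined by φ_1 = C_{p-1} > 0 and φ_n = ∑_{l=1}^{n-1} φ_l φ_{n-1-l} + Q_p(n-1)φ_{n-1} for n ≥ 2 (with φ_0 = 0). Set Γ_j = (∑_{l=1}^{j} φ_l φ_{j-l}) / φ_j for j ≥ 1. Then the infinite product K_p = ∏_{j=1}^{∞} (1 + Γ_j / Q_p(j)) converges to a finite positive limit; consequently φ_n / (C_{p-1} ∏_{j=1}^{n-1} Q_p(j)) converges to a finite positive limit a_p = K_p as n → ∞. -/

import Mathlib

open Finset Filter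

noncomputable def Qpoly (p j : ℕ) : ℝ :=
  (2 ^ p / (Nat.factorial p : ℝ)) *
    ∏ k ∈ Finset.Icc 1 p, (((2 * p + 1) * j : ℝ) + 2 * p - 1 - 2 * k)

/-!
Write `u n = ∏_{j ≤ n} (1 + Γ_j / Q_j)` and `W n = ∏_{j ≤ n} Q_j`. The recurrence says exactly
`φ (n + 2) = φ (n + 1) * Q (n + 1) * (1 + Γ_{n+1} / Q (n + 1))`, so `φ (n + 1) = C * W n * u n`
and both limits are the limit of the increasing sequence `u`. Feeding this identity back into
`Γ_{n+1}`, together with `W a * W b ≤ W (a + b)` for increasing `Q`, gives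
`Γ_{n+1} ≤ C (n + 1) u n / Q n`, i.e. the Riccati-type inequality
`u (n + 1) ≤ u n (1 + e n * u n)` with `e n = C (n + 1) / (Q n Q (n + 1))`. Such an inequality
lowers `1 / u` by at most `e n` per step, and `∑ e n ≤ 1 / 2` because `Q j ≥ 4 ^ p j ^ 2`;
hence `u ≤ 2`.
-/

lemma two_mul_mul_le_Qpoly_factor {p j k : ℕ} (hj : 1 ≤ j) (hk : k ∈ Icc 1 p) :
    (2 * p * j : ℝ) ≤ ((2 * p + 1) * j : ℝ) + 2 * p - 1 - 2 * k := by
  have hj' : (1 : ℝ) ≤ j := by exact_mod_cast hj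
  have hk' : (k : ℝ) ≤ p := by exact_mod_cast (mem_Icc.1 hk).2
  nlinarith

lemma Qpoly_monotoneOn (p : ℕ) : MonotoneOn (Qpoly p) (Set.Ici 1) := by
  intro a ha b _ hab
  have hab' : (a : ℝ) ≤ b := by exact_mod_cast hab
  refine mul_le_mul_of_nonneg_left (prod_le_prod (fun k hk => ?_) fun k _ => ?_) (by positivity)
  · exact (by positivity : (0 : ℝ) ≤ 2 * p * a).trans (two_mul_mul_le_Qpoly_factor ha hk)
  · nlinarith

lemma four_pow_mul_sq_le_Qpoly {p j : ℕ} (hp : 2 ≤ p) (hj : 1 ≤ j) :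
    4 ^ p * (j : ℝ) ^ 2 ≤ Qpoly p j := by
  have hj' : (1 : ℝ) ≤ j := by exact_mod_cast hj
  have hfact : (1 : ℝ) ≤ (p : ℝ) ^ p / p.factorial := by
    rw [one_le_div (by positivity)]
    exact_mod_cast p.factorial_le_pow
  calc 4 ^ p * (j : ℝ) ^ 2 ≤ 4 ^ p * (j : ℝ) ^ p * ((p : ℝ) ^ p / p.factorial) := by
        rw [← mul_one (4 ^ p * (j : ℝ) ^ 2)]
        gcongr
    _ = 2 ^ p / p.factorial * ∏ _k ∈ Icc 1 p, (2 * p * j : ℝ) := by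
        rw [prod_const, Nat.card_Icc, Nat.add_sub_cancel, mul_pow, mul_pow,
          show (4 : ℝ) ^ p = 2 ^ p * 2 ^ p by rw [← mul_pow]; norm_num]
        ring
    _ ≤ Qpoly p j :=
        mul_le_mul_of_nonneg_left (prod_le_prod (fun _ _ => by positivity)
          fun _ hk => two_mul_mul_le_Qpoly_factor hj hk) (by positivity)

lemma catalan_le_four_pow (n : ℕ) : catalan n ≤ 4 ^ n :=
  ((Nat.le_mul_of_pos_left _ n.succ_pos).trans_eq (succ_mul_catalan_eq_centralBinom n)).trans
    (Nat.centralBinom_le_four_pow n)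

lemma catalan_pos (n : ℕ) : 0 < catalan n :=
  Nat.pos_of_mul_pos_left ((succ_mul_catalan_eq_centralBinom n).symm ▸ n.centralBinom_pos)

lemma inv_sub_sum_le_inv_of_le_mul_one_add {u e : ℕ → ℝ} (hu : ∀ n, 0 < u n)
    (hstep : ∀ n, u (n + 1) ≤ u n * (1 + e n * u n)) (n : ℕ) :
    (u 0)⁻¹ - ∑ k ∈ range n, e k ≤ (u n)⁻¹ := by
  induction n with
  | zero => simp
  | succ n ih =>
    have hpos : 0 < 1 + e n * u n := pos_of_mul_pos_right ((hu _).trans_le (hstep n)) (hu n).le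
    have hgap : (u n)⁻¹ - e n ≤ (u n * (1 + e n * u n))⁻¹ :=
      calc (u n)⁻¹ - e n = (1 - e n * u n) / u n := by field_simp [(hu n).ne']
        _ ≤ (1 + e n * u n)⁻¹ / u n := by
            refine div_le_div_of_nonneg_right ?_ (hu n).le
            rw [← one_div, le_div_iff₀ hpos]
            nlinarith [sq_nonneg (e n * u n)]
        _ = (u n * (1 + e n * u n))⁻¹ := by rw [div_eq_mul_inv, mul_inv, mul_comm]
    calc (u 0)⁻¹ - ∑ k ∈ range (n + 1), e k = ((u 0)⁻¹ - ∑ k ∈ range n, e k) - e n := by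
          rw [sum_range_succ]; ring
      _ ≤ (u n * (1 + e n * u n))⁻¹ := by linarith
      _ ≤ (u (n + 1))⁻¹ := inv_anti₀ (hu _) (hstep n)

lemma sum_range_div_mul_le_half {Q : ℕ → ℝ} {c a : ℝ} (ha : 0 < a) (hac : 2 * c ≤ a ^ 2)
    (hQ : ∀ j, 1 ≤ j → a * j ^ 2 ≤ Q j) (n : ℕ) :
    ∑ k ∈ range n, c * ((k + 1 : ℕ) + 1) / (Q (k + 1) * Q (k + 1 + 1)) ≤ 1 / 2 := by
  have hterm : ∀ k : ℕ, c * ((k + 1 : ℕ) + 1) / (Q (k + 1) * Q (k + 1 + 1))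
      ≤ (2 * ((k : ℝ) + 1))⁻¹ - (2 * (((k + 1 : ℕ) : ℝ) + 1))⁻¹ := by
    intro k
    have hx := hQ (k + 1) (by omega)
    have hy := hQ (k + 1 + 1) (by omega)
    push_cast at hx hy ⊢
    set x : ℝ := (k : ℝ) + 1
    have hx1 : 1 ≤ x := by simp [x]
    have hQx : 0 < Q (k + 1) := (mul_pos ha (pow_pos (by linarith) 2)).trans_le hx
    have hQy : 0 < Q (k + 1 + 1) := (mul_pos ha (pow_pos (by linarith) 2)).trans_le hy
    rw [show (2 * x)⁻¹ - (2 * (x + 1))⁻¹ = (2 * x * (x + 1))⁻¹ by field_simp; ring,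
      div_le_iff₀ (mul_pos hQx hQy), inv_mul_eq_div, le_div_iff₀ (by positivity)]
    calc c * (x + 1) * (2 * x * (x + 1)) = 2 * c * (x * (x + 1) ^ 2) := by ring
      _ ≤ a ^ 2 * (x * (x + 1) ^ 2) :=
        mul_le_mul_of_nonneg_right hac (mul_nonneg (by linarith) (sq_nonneg _))
      _ ≤ a ^ 2 * (x ^ 2 * (x + 1) ^ 2) := by gcongr; nlinarith
      _ = a * x ^ 2 * (a * (x + 1) ^ 2) := by ring
      _ ≤ Q (k + 1) * Q (k + 1 + 1) := mul_le_mul hx hy (by positivity) hQx.le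
  calc ∑ k ∈ range n, c * ((k + 1 : ℕ) + 1) / (Q (k + 1) * Q (k + 1 + 1))
      ≤ ∑ k ∈ range n, ((2 * ((k : ℝ) + 1))⁻¹ - (2 * (((k + 1 : ℕ) : ℝ) + 1))⁻¹) :=
        sum_le_sum fun k _ => hterm k
    _ = 1 / 2 - (2 * ((n : ℝ) + 1))⁻¹ := by
        rw [sum_range_sub' (fun k : ℕ => (2 * ((k : ℝ) + 1))⁻¹)]
        norm_num
    _ ≤ 1 / 2 := sub_le_self _ (by positivity)

lemma pos_of_forall_mul_sq_le {Q : ℕ → ℝ} {a : ℝ} (ha : 0 < a)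
    (hQ : ∀ j, 1 ≤ j → a * j ^ 2 ≤ Q j) (j : ℕ) (hj : 1 ≤ j) : 0 < Q j :=
  (mul_pos ha (pow_pos (Nat.cast_pos.2 hj) 2)).trans_le (hQ j hj)

section ConvRecurrence

variable {Q : ℕ → ℝ} {c : ℝ} {φ : ℕ → ℝ}

/-- `Γ_j` in the paper. -/
noncomputable def convRatio (φ : ℕ → ℝ) (j : ℕ) : ℝ :=
  (∑ l ∈ Icc 1 j, φ l * φ (j - l)) / φ j

/-- The partial products of `K_p`. -/
noncomputable def convProd (Q φ : ℕ → ℝ) (n : ℕ) : ℝ :=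
  ∏ j ∈ Icc 1 n, (1 + convRatio φ j / Q j)

structure IsConvRecurrence (Q : ℕ → ℝ) (c : ℝ) (φ : ℕ → ℝ) : Prop where
  zero : φ 0 = 0
  one : φ 1 = c
  succ : ∀ n, 2 ≤ n →
    φ n = (∑ l ∈ Icc 1 (n - 1), φ l * φ (n - 1 - l)) + Q (n - 1) * φ (n - 1)

lemma convProd_zero : convProd Q φ 0 = 1 := by
  simp [convProd]

lemma convProd_succ (n : ℕ) :
    convProd Q φ (n + 1) = convProd Q φ n * (1 + convRatio φ (n + 1) / Q (n + 1)) :=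
  prod_Icc_succ_top (by omega) _

lemma prod_Icc_mul_prod_Icc_le (hQ : ∀ j, 1 ≤ j → 0 < Q j)
    (hmono : MonotoneOn Q (Set.Ici 1)) (a b : ℕ) :
    (∏ j ∈ Icc 1 a, Q j) * ∏ j ∈ Icc 1 b, Q j ≤ ∏ j ∈ Icc 1 (a + b), Q j := by
  induction b with
  | zero => simp
  | succ b ih =>
    rw [prod_Icc_succ_top (by omega), ← add_assoc, prod_Icc_succ_top (by omega), ← mul_assoc]
    exact mul_le_mul ih (hmono (Set.mem_Ici.2 (by omega)) (Set.mem_Ici.2 (by omega)) (by omega))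
      (hQ _ (by omega)).le (prod_pos fun j hj => hQ j (mem_Icc.1 hj).1).le

namespace IsConvRecurrence

theorem pos (hφ : IsConvRecurrence Q c φ) (hc : 0 < c) (hQ : ∀ j, 1 ≤ j → 0 < Q j) :
    ∀ n, 1 ≤ n → 0 < φ n := by
  intro n
  induction n using Nat.strong_induction_on with
  | _ n ih =>
    intro hn
    rcases hn.eq_or_lt with rfl | hn
    · exact hφ.one ▸ hc
    have hnonneg : ∀ m < n, 0 ≤ φ m := fun m hm => by
      rcases m.eq_zero_or_pos with rfl | hm0
      · exact hφ.zero.ge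
      · exact (ih m hm hm0).le
    have hsum : 0 ≤ ∑ l ∈ Icc 1 (n - 1), φ l * φ (n - 1 - l) := sum_nonneg fun l hl =>
      mul_nonneg (hnonneg l (by grind)) (hnonneg _ (by omega))
    rw [hφ.succ n hn]
    exact add_pos_of_nonneg_of_pos hsum (mul_pos (hQ _ (by omega)) (ih _ (by omega) (by omega)))

theorem nonneg (hφ : IsConvRecurrence Q c φ) (hc : 0 < c) (hQ : ∀ j, 1 ≤ j → 0 < Q j)
    (n : ℕ) : 0 ≤ φ n := by
  rcases n.eq_zero_or_pos with rfl | hn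
  · exact hφ.zero.ge
  · exact (hφ.pos hc hQ n hn).le

theorem convProd_one (hφ : IsConvRecurrence Q c φ) : convProd Q φ 1 = 1 := by
  simp [convProd, convRatio, hφ.zero]

theorem one_le_convProd_factor (hφ : IsConvRecurrence Q c φ) (hc : 0 < c)
    (hQ : ∀ j, 1 ≤ j → 0 < Q j) {j : ℕ} (hj : 1 ≤ j) : 1 ≤ 1 + convRatio φ j / Q j :=
  le_add_of_nonneg_right <| div_nonneg
    (div_nonneg (sum_nonneg fun _ _ => mul_nonneg (hφ.nonneg hc hQ _) (hφ.nonneg hc hQ _))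
      (hφ.nonneg hc hQ _)) (hQ j hj).le

theorem one_le_convProd (hφ : IsConvRecurrence Q c φ) (hc : 0 < c)
    (hQ : ∀ j, 1 ≤ j → 0 < Q j) (n : ℕ) : 1 ≤ convProd Q φ n :=
  one_le_prod fun _ hj => hφ.one_le_convProd_factor hc hQ (mem_Icc.1 hj).1

theorem convProd_mono (hφ : IsConvRecurrence Q c φ) (hc : 0 < c) (hQ : ∀ j, 1 ≤ j → 0 < Q j) :
    Monotone (convProd Q φ) := by
  refine monotone_nat_of_le_succ fun n => ?_
  rw [convProd_succ]
  exact le_mul_of_one_le_right (zero_le_one.trans (hφ.one_le_convProd hc hQ n))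
    (hφ.one_le_convProd_factor hc hQ (by omega))

theorem eq_mul_prod_mul_convProd (hφ : IsConvRecurrence Q c φ) (hc : 0 < c)
    (hQ : ∀ j, 1 ≤ j → 0 < Q j) (n : ℕ) :
    φ (n + 1) = c * (∏ j ∈ Icc 1 n, Q j) * convProd Q φ n := by
  induction n with
  | zero => simp [hφ.one, convProd_zero]
  | succ n ih =>
    have hconv : ∑ l ∈ Icc 1 (n + 1), φ l * φ (n + 1 - l) = convRatio φ (n + 1) * φ (n + 1) :=
      (div_mul_cancel₀ _ (hφ.pos hc hQ _ (by omega)).ne').symm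
    rw [hφ.succ (n + 2) (by omega), show n + 2 - 1 = n + 1 by omega, hconv, convProd_succ,
      prod_Icc_succ_top (by omega), ih]
    field_simp [(hQ (n + 1) (by omega)).ne']
    ring

theorem mul_mul_le_mul_convProd_mul (hφ : IsConvRecurrence Q c φ) (hc : 0 < c)
    (hQ : ∀ j, 1 ≤ j → 0 < Q j) (hmono : MonotoneOn Q (Set.Ici 1)) (i k : ℕ) :
    φ (i + 1) * φ (k + 1) * Q (i + k + 1) ≤ c * convProd Q φ (i + k + 1) * φ (i + k + 2) := by
  set u := convProd Q φ
  set W := fun m => ∏ j ∈ Icc 1 m, Q j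
  have hu0 : ∀ m, 0 ≤ u m := fun m => zero_le_one.trans (hφ.one_le_convProd hc hQ m)
  have hWu : W i * W k * (u i * u k) ≤ W (i + k) * (u (i + k + 1) * u (i + k + 1)) :=
    mul_le_mul (prod_Icc_mul_prod_Icc_le hQ hmono i k)
      (mul_le_mul (hφ.convProd_mono hc hQ (by omega)) (hφ.convProd_mono hc hQ (by omega))
        (hu0 k) (hu0 _))
      (mul_nonneg (hu0 i) (hu0 k)) (prod_pos fun j hj => hQ j (mem_Icc.1 hj).1).le
  rw [hφ.eq_mul_prod_mul_convProd hc hQ i, hφ.eq_mul_prod_mul_convProd hc hQ k,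
    hφ.eq_mul_prod_mul_convProd hc hQ (i + k + 1), prod_Icc_succ_top (by omega)]
  calc c * W i * u i * (c * W k * u k) * Q (i + k + 1)
      = c ^ 2 * Q (i + k + 1) * (W i * W k * (u i * u k)) := by ring
    _ ≤ c ^ 2 * Q (i + k + 1) * (W (i + k) * (u (i + k + 1) * u (i + k + 1))) :=
      mul_le_mul_of_nonneg_left hWu (mul_nonneg (sq_nonneg c) (hQ _ (by omega)).le)
    _ = c * u (i + k + 1) * (c * (W (i + k) * Q (i + k + 1)) * u (i + k + 1)) := by ring

theorem convRatio_succ_le (hφ : IsConvRecurrence Q c φ) (hc : 0 < c)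
    (hQ : ∀ j, 1 ≤ j → 0 < Q j) (hmono : MonotoneOn Q (Set.Ici 1)) {n : ℕ} (hn : 1 ≤ n) :
    convRatio φ (n + 1) ≤ c * (n + 1) * convProd Q φ n / Q n := by
  have hrhs_nonneg : 0 ≤ c * convProd Q φ n / Q n * φ (n + 1) :=
    mul_nonneg (div_nonneg (mul_nonneg hc.le (zero_le_one.trans (hφ.one_le_convProd hc hQ n)))
      (hQ n hn).le) (hφ.nonneg hc hQ _)
  have hterm : ∀ l ∈ Icc 1 (n + 1),
      φ l * φ (n + 1 - l) ≤ c * convProd Q φ n / Q n * φ (n + 1) := by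
    intro l hl
    obtain ⟨hl1, hl2⟩ := mem_Icc.1 hl
    rcases hl2.eq_or_lt with rfl | hlt
    · rw [Nat.sub_self, hφ.zero, mul_zero]
      exact hrhs_nonneg
    obtain ⟨i, rfl⟩ : ∃ i, l = i + 1 := ⟨l - 1, by omega⟩
    obtain ⟨k, rfl⟩ : ∃ k, n = i + k + 1 := ⟨n - i - 1, by omega⟩
    rw [show i + k + 1 + 1 - (i + 1) = k + 1 by omega, div_mul_eq_mul_div,
      le_div_iff₀ (hQ _ hn)]
    exact hφ.mul_mul_le_mul_convProd_mul hc hQ hmono i k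
  rw [convRatio, div_le_iff₀ (hφ.pos hc hQ _ (by omega))]
  calc ∑ l ∈ Icc 1 (n + 1), φ l * φ (n + 1 - l)
      ≤ ∑ _l ∈ Icc 1 (n + 1), c * convProd Q φ n / Q n * φ (n + 1) := sum_le_sum hterm
    _ = c * (n + 1) * convProd Q φ n / Q n * φ (n + 1) := by
      rw [sum_const, Nat.card_Icc, nsmul_eq_mul]
      push_cast
      ring

theorem convProd_succ_le (hφ : IsConvRecurrence Q c φ) (hc : 0 < c)
    (hQ : ∀ j, 1 ≤ j → 0 < Q j) (hmono : MonotoneOn Q (Set.Ici 1)) {n : ℕ} (hn : 1 ≤ n) :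
    convProd Q φ (n + 1)
      ≤ convProd Q φ n * (1 + c * (n + 1) / (Q n * Q (n + 1)) * convProd Q φ n) := by
  rw [convProd_succ]
  refine mul_le_mul_of_nonneg_left (add_le_add le_rfl ?_)
    (zero_le_one.trans (hφ.one_le_convProd hc hQ n))
  calc convRatio φ (n + 1) / Q (n + 1) ≤ c * (n + 1) * convProd Q φ n / Q n / Q (n + 1) :=
        div_le_div_of_nonneg_right (hφ.convRatio_succ_le hc hQ hmono hn) (hQ _ (by omega)).le
    _ = c * (n + 1) / (Q n * Q (n + 1)) * convProd Q φ n := by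
      rw [div_div]; ring

theorem convProd_le_two (hφ : IsConvRecurrence Q c φ) (hc : 0 < c) {a : ℝ} (ha : 0 < a)
    (hac : 2 * c ≤ a ^ 2) (hQ : ∀ j, 1 ≤ j → a * j ^ 2 ≤ Q j)
    (hmono : MonotoneOn Q (Set.Ici 1)) (n : ℕ) : convProd Q φ n ≤ 2 := by
  have hQpos := pos_of_forall_mul_sq_le ha hQ
  have hu := hφ.one_le_convProd hc hQpos
  rcases n with _ | n
  · rw [convProd_zero]; norm_num
  have hinv := inv_sub_sum_le_inv_of_le_mul_one_add (u := fun m => convProd Q φ (m + 1))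
    (fun m => zero_lt_one.trans_le (hu _))
    (fun m => hφ.convProd_succ_le hc hQpos hmono (n := m + 1) (by omega)) n
  simp only [hφ.convProd_one, inv_one] at hinv
  have hsum := sum_range_div_mul_le_half ha hac hQ n
  exact (inv_le_inv₀ two_pos (zero_lt_one.trans_le (hu (n + 1)))).1 (by linarith)

theorem exists_pos_tendsto (hφ : IsConvRecurrence Q c φ) (hc : 0 < c) {a : ℝ} (ha : 0 < a)
    (hac : 2 * c ≤ a ^ 2) (hQ : ∀ j, 1 ≤ j → a * j ^ 2 ≤ Q j)
    (hmono : MonotoneOn Q (Set.Ici 1)) :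
    ∃ K : ℝ, 0 < K ∧ Tendsto (convProd Q φ) atTop (nhds K) ∧
      Tendsto (fun n => φ n / (c * ∏ j ∈ Icc 1 (n - 1), Q j)) atTop (nhds K) := by
  have hQpos := pos_of_forall_mul_sq_le ha hQ
  have hbdd : BddAbove (Set.range (convProd Q φ)) :=
    ⟨2, Set.forall_mem_range.2 (hφ.convProd_le_two hc ha hac hQ hmono)⟩
  have hlim := tendsto_atTop_ciSup (hφ.convProd_mono hc hQpos) hbdd
  refine ⟨_, zero_lt_one.trans_le ((hφ.one_le_convProd hc hQpos 0).trans (le_ciSup hbdd 0)),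
    hlim, (hlim.comp (tendsto_sub_atTop_nat 1)).congr' ?_⟩
  filter_upwards [eventually_ge_atTop 1] with n hn
  obtain ⟨m, rfl⟩ := Nat.exists_eq_add_of_le' hn
  have hW : 0 < ∏ j ∈ Icc 1 m, Q j := prod_pos fun j hj => hQpos j (mem_Icc.1 hj).1
  rw [Function.comp_apply, Nat.add_sub_cancel, hφ.eq_mul_prod_mul_convProd hc hQpos]
  field_simp

end IsConvRecurrence

end ConvRecurrence

/-- Let `p ≥ 2`, `φ_0 = 0`, `φ_1 = C_{p-1}`, and
`φ_n = ∑_{l=1}^{n-1} φ_l φ_{n-1-l} + Q_p(n-1)φ_{n-1}` for `n ≥ 2`. With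
`Γ_j = (∑_{l=1}^j φ_l φ_{j-l})/φ_j`, the infinite product
`K_p = ∏_{j≥1} (1 + Γ_j/Q_p(j))` converges to a finite positive limit; consequently
`φ_n/(C_{p-1} ∏_{j=1}^{n-1} Q_p(j))` converges to the same finite positive limit
`a_p = K_p`. -/
theorem phi_asymptotic_constant (p : ℕ) (hp : 2 ≤ p) (φ : ℕ → ℝ)
    (h0 : φ 0 = 0) (h1 : φ 1 = (catalan (p - 1) : ℝ))
    (hrec : ∀ n, 2 ≤ n →
      φ n = (∑ l ∈ Finset.Icc 1 (n - 1), φ l * φ (n - 1 - l)) + Qpoly p (n - 1) * φ (n - 1)) :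
    ∃ K : ℝ, 0 < K ∧
      Filter.Tendsto
        (fun n : ℕ => ∏ j ∈ Finset.Icc 1 n,
          (1 + ((∑ l ∈ Finset.Icc 1 j, φ l * φ (j - l)) / φ j) / Qpoly p j))
        Filter.atTop (nhds K) ∧
      Filter.Tendsto
        (fun n : ℕ => φ n / ((catalan (p - 1) : ℝ) * ∏ j ∈ Finset.Icc 1 (n - 1), Qpoly p j))
        Filter.atTop (nhds K) := by
  have hcatalan : 2 * catalan (p - 1) ≤ (4 ^ p) ^ 2 :=
    calc 2 * catalan (p - 1) ≤ 4 * 4 ^ (p - 1) := by have := catalan_le_four_pow (p - 1); omega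
      _ = 4 ^ p := by rw [← pow_succ', Nat.sub_add_cancel (by omega)]
      _ ≤ (4 ^ p) ^ 2 := Nat.le_self_pow two_ne_zero _
  exact IsConvRecurrence.exists_pos_tendsto ⟨h0, h1, hrec⟩ (by exact_mod_cast catalan_pos _)
    (by positivity) (by exact_mod_cast hcatalan) (fun j hj => four_pow_mul_sq_le_Qpoly hp hj)
    (Qpoly_monotoneOn p)
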